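/- Let R be a prime ring of characteristic different from 2, let (D₁, d₁) and (D₂, d₂) be generalized derivations on R, and suppose the pair (D₁² + D₁∘D₂, d₁² + d₁∘d₂) is a generalized derivation on R. Then the following assertions are equivalent: (a) D₁ is a nonzero derivation; (b) D₂ is a nonzero derivation and D₂ = −D₁; (c) both D₁ and D₂ are nonzero derivations; (d) D₁ is a nonzero derivation and D₁ = −D₂. -/

import Mathlib

/-- An additive map `d : R → R` with `d (x*y) = d x * y + x * d y` is a derivation. -/
def IsDerivation {R : Type*} [Ring R] (d : R → R) : Prop :=
  (∀ x y, d (x + y) = d x + d y) ∧ (∀ x y, d (x * y) = d x * y + x * d y)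

/-- A generalized derivation `(D, d)`: `D` additive, `d` a derivation, and
`D (x*y) = D x * y + x * d y`. -/
def IsGenDerivation {R : Type*} [Ring R] (D d : R → R) : Prop :=
  (∀ x y, D (x + y) = D x + D y) ∧ IsDerivation d ∧ (∀ x y, D (x * y) = D x * y + x * d y)

/-!
Expanding the product rule of `D₁² + D₁D₂` on `x * y` leaves the identity
`(2 D₁ x + D₂ x) d₁ y + D₁ x d₂ y = 0`. Replacing `y` by `y * z`, and then `D` by `d` via
`D w = D 1 * w + d w`, gives `(d₁ w + d₂ w) y d₁ z + d₁ w y (d₁ z + d₂ z) = 0`. When `d₁ ≠ 0`,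
primeness and `char R ≠ 2` turn this into `d₁ w = 0 ∨ d₁ w + d₂ w = 0` for every `w`, and since
an additive group is not the union of two proper subgroups, `d₂ = -d₁`. Feeding this back into
the first identity gives `(D₁ x + D₂ x) R d₁(R) = 0`, so `D₂ = -D₁`. A derivation `D₁` has
`d₁ = D₁`, so (a) forces `D₂ = -D₁`, and the other assertions follow.
-/

section Derivations

variable {R : Type*} [Ring R] {d e D E : R → R}

theorem IsDerivation.map_add (hd : IsDerivation d) (x y : R) : d (x + y) = d x + d y := hd.1 x y

theorem IsDerivation.map_mul (hd : IsDerivation d) (x y : R) : d (x * y) = d x * y + x * d y :=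
  hd.2 x y

theorem IsDerivation.add (hd : IsDerivation d) (he : IsDerivation e) :
    IsDerivation fun x => d x + e x :=
  ⟨fun x y => by simp only [hd.map_add, he.map_add]; abel,
   fun x y => by simp only [hd.map_mul, he.map_mul]; noncomm_ring⟩

theorem IsDerivation.neg (hd : IsDerivation d) : IsDerivation (-d) :=
  ⟨fun x y => by simp only [Pi.neg_apply, hd.map_add, neg_add],
   fun x y => by simp only [Pi.neg_apply, hd.map_mul]; noncomm_ring⟩

theorem IsGenDerivation.map_add (hD : IsGenDerivation D d) (x y : R) : D (x + y) = D x + D y :=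
  hD.1 x y

theorem IsGenDerivation.isDerivation (hD : IsGenDerivation D d) : IsDerivation d := hD.2.1

theorem IsGenDerivation.map_mul (hD : IsGenDerivation D d) (x y : R) :
    D (x * y) = D x * y + x * d y :=
  hD.2.2 x y

theorem IsGenDerivation.add (hD : IsGenDerivation D d) (hE : IsGenDerivation E e) :
    IsGenDerivation (fun x => D x + E x) (fun x => d x + e x) :=
  ⟨fun x y => by simp only [hD.map_add, hE.map_add]; abel,
   hD.isDerivation.add hE.isDerivation,
   fun x y => by simp only [hD.map_mul, hE.map_mul]; noncomm_ring⟩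

theorem IsGenDerivation.map_eq_map_one_mul_add (hD : IsGenDerivation D d) (x : R) :
    D x = D 1 * x + d x := by
  simpa only [one_mul] using hD.map_mul 1 x

theorem IsGenDerivation.eq_of_isDerivation (hD : IsGenDerivation D d) (hD' : IsDerivation D) :
    d = D :=
  funext fun y => add_left_cancel (a := D 1 * y) <| by
    simpa only [one_mul] using (hD.map_mul 1 y).symm.trans (hD'.map_mul 1 y)

theorem IsGenDerivation.map_comp_mul (hD : IsGenDerivation D d) (hE : IsGenDerivation E e)
    (x y : R) : D (E (x * y)) = D (E x) * y + E x * d y + D x * e y + x * d (e y) := by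
  rw [hE.map_mul, hD.map_add, hD.map_mul, hD.map_mul]
  abel

theorem IsDerivation.mul_mul_add_mul_mul_eq_zero (hd : IsDerivation d) (he : IsDerivation e)
    {a b : R} (hab : ∀ y, a * d y + b * e y = 0) (y z : R) : a * y * d z + b * y * e z = 0 := by
  have hyz := hab (y * z)
  rw [hd.map_mul, he.map_mul] at hyz
  calc a * y * d z + b * y * e z
      = a * (d y * z + y * d z) + b * (e y * z + y * e z) - (a * d y + b * e y) * z := by
        noncomm_ring
    _ = 0 := by rw [hyz, hab y, zero_mul, sub_zero]

theorem IsGenDerivation.mul_mul_add_mul_mul_eq_zero (hD : IsGenDerivation D d)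
    (hE : IsGenDerivation E e) {u v : R} (h : ∀ x y, D x * y * u + E x * y * v = 0) (w y : R) :
    d w * y * u + e w * y * v = 0 := by
  calc d w * y * u + e w * y * v
      = (D w * y * u + E w * y * v) - (D 1 * (w * y) * u + E 1 * (w * y) * v) := by
        rw [hD.map_eq_map_one_mul_add w, hE.map_eq_map_one_mul_add w]
        noncomm_ring
    _ = 0 := by rw [h, h, sub_zero]

end Derivations

theorem eq_zero_of_forall_eq_zero_or_eq_zero {G H : Type*} [AddGroup G] [AddGroup H] {f g : G → H}
    (hf : ∀ x y, f (x + y) = f x + f y) (hg : ∀ x y, g (x + y) = g x + g y)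
    (hfg : ∀ x, f x = 0 ∨ g x = 0) {z : G} (hz : f z ≠ 0) (x : G) : g x = 0 := by
  have hgz : g z = 0 := (hfg z).resolve_left hz
  rcases hfg x with hfx | hgx
  · have hxz : f (x + z) ≠ 0 := by rwa [hf, hfx, zero_add]
    simpa only [hg, hgz, add_zero] using (hfg (x + z)).resolve_left hxz
  · exact hgx

section PrimeRing

variable {R : Type*} [Ring R]

theorem eq_zero_of_forall_mul_mul_eq_zero
    (hprime : ∀ x y : R, (∀ r : R, x * r * y = 0) → x = 0 ∨ y = 0) {f : R → R} {z : R}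
    (hz : f z ≠ 0) {a : R} (h : ∀ y, a * y * f z = 0) : a = 0 :=
  (hprime _ _ h).resolve_right hz

theorem eq_zero_or_eq_zero_of_mul_mul_add_mul_mul_eq_zero
    (hprime : ∀ x y : R, (∀ r : R, x * r * y = 0) → x = 0 ∨ y = 0)
    (hchar : ∀ x : R, 2 * x = 0 → x = 0) {f g : R → R}
    (h : ∀ w y z, g w * y * f z + f w * y * g z = 0) {z : R} (hz : f z ≠ 0) (w : R) :
    f w = 0 ∨ g w = 0 := by
  have hcomm : ∀ y, g w * y * f w = f w * y * g w := fun y =>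
    sub_eq_zero.mp <| eq_zero_of_forall_mul_mul_eq_zero hprime hz fun y' => by
      calc (g w * y * f w - f w * y * g w) * y' * f z
          = (g w * (y * f w * y') * f z + f w * (y * f w * y') * g z)
            - f w * y * (g w * y' * f z + f w * y' * g z) := by noncomm_ring
        _ = 0 := by rw [h, h, mul_zero, sub_zero]
  refine hprime _ _ fun y => hchar _ ?_
  simpa only [two_mul, hcomm] using h w y w

variable {D₁ d₁ D₂ d₂ : R → R}

theorem IsGenDerivation.mul_mul_add_mul_mul_eq_zero_of_sq_add_comp
    (h₁ : IsGenDerivation D₁ d₁) (h₂ : IsGenDerivation D₂ d₂)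
    (h : IsGenDerivation (fun x => D₁ (D₁ x) + D₁ (D₂ x)) (fun x => d₁ (d₁ x) + d₁ (d₂ x)))
    (x y z : R) : (D₁ x + D₁ x + D₂ x) * y * d₁ z + D₁ x * y * d₂ z = 0 := by
  refine h₁.isDerivation.mul_mul_add_mul_mul_eq_zero h₂.isDerivation (fun y => ?_) y z
  have hxy := h.map_mul x y
  simp only [h₁.map_comp_mul h₁, h₁.map_comp_mul h₂] at hxy
  calc (D₁ x + D₁ x + D₂ x) * d₁ y + D₁ x * d₂ y
      = (D₁ (D₁ x) * y + D₁ x * d₁ y + D₁ x * d₁ y + x * d₁ (d₁ y) +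
          (D₁ (D₂ x) * y + D₂ x * d₁ y + D₁ x * d₂ y + x * d₁ (d₂ y))) -
        ((D₁ (D₁ x) + D₁ (D₂ x)) * y + x * (d₁ (d₁ y) + d₁ (d₂ y))) := by noncomm_ring
    _ = 0 := by rw [hxy, sub_self]

theorem IsGenDerivation.eq_neg_of_sq_add_comp
    (hprime : ∀ x y : R, (∀ r : R, x * r * y = 0) → x = 0 ∨ y = 0)
    (hchar : ∀ x : R, 2 * x = 0 → x = 0)
    (h₁ : IsGenDerivation D₁ d₁) (h₂ : IsGenDerivation D₂ d₂)
    (h : IsGenDerivation (fun x => D₁ (D₁ x) + D₁ (D₂ x)) (fun x => d₁ (d₁ x) + d₁ (d₂ x)))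
    (hd₁ : d₁ ≠ 0) : D₂ = -D₁ := by
  obtain ⟨z, hz⟩ := Function.ne_iff.mp hd₁
  have hid := h₁.mul_mul_add_mul_mul_eq_zero_of_sq_add_comp h₂ h
  have hdd : ∀ w y z, (d₁ w + d₂ w) * y * d₁ z + d₁ w * y * (d₁ z + d₂ z) = 0 := fun w y z => by
    rw [← ((h₁.add h₁).add h₂).mul_mul_add_mul_mul_eq_zero h₁ (fun x y => hid x y z) w y]
    noncomm_ring
  have hd₂ : ∀ w, d₂ w = -d₁ w := fun w => eq_neg_of_add_eq_zero_right <|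
    eq_zero_of_forall_eq_zero_or_eq_zero h₁.isDerivation.map_add
      (h₁.isDerivation.add h₂.isDerivation).map_add
      (eq_zero_or_eq_zero_of_mul_mul_add_mul_mul_eq_zero hprime hchar hdd hz) hz w
  funext x
  refine eq_neg_of_add_eq_zero_right <| eq_zero_of_forall_mul_mul_eq_zero hprime hz fun y => ?_
  rw [← hid x y z, hd₂]
  noncomm_ring

end PrimeRing

theorem stmt10 {R : Type*} [Ring R]
    (hprime : ∀ x y : R, (∀ r : R, x * r * y = 0) → x = 0 ∨ y = 0)
    (hchar : ∀ x : R, 2 * x = 0 → x = 0)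
    (D₁ d₁ D₂ d₂ : R → R)
    (h₁ : IsGenDerivation D₁ d₁) (h₂ : IsGenDerivation D₂ d₂)
    (h : IsGenDerivation (fun x => D₁ (D₁ x) + D₁ (D₂ x)) (fun x => d₁ (d₁ x) + d₁ (d₂ x))) :
    [IsDerivation D₁ ∧ D₁ ≠ 0,
     (IsDerivation D₂ ∧ D₂ ≠ 0) ∧ D₂ = -D₁,
     (IsDerivation D₁ ∧ D₁ ≠ 0) ∧ (IsDerivation D₂ ∧ D₂ ≠ 0),
     (IsDerivation D₁ ∧ D₁ ≠ 0) ∧ D₁ = -D₂].TFAE := by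
  have hneg : IsDerivation D₁ ∧ D₁ ≠ 0 → D₂ = -D₁ := fun ⟨hder, hne⟩ =>
    h₁.eq_neg_of_sq_add_comp hprime hchar h₂ h <| by
      rwa [h₁.eq_of_isDerivation hder]
  tfae_have 1 → 2 := fun ha => by
    have h₂₁ := hneg ha
    exact ⟨⟨h₂₁ ▸ ha.1.neg, h₂₁ ▸ neg_ne_zero.mpr ha.2⟩, h₂₁⟩
  tfae_have 2 → 3 := fun ⟨⟨hder, hne⟩, h₂₁⟩ => by
    have h₁₂ : D₁ = -D₂ := neg_eq_iff_eq_neg.mp h₂₁.symm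
    exact ⟨⟨h₁₂ ▸ hder.neg, h₁₂ ▸ neg_ne_zero.mpr hne⟩, hder, hne⟩
  tfae_have 3 → 4 := fun ⟨ha, _⟩ => ⟨ha, neg_eq_iff_eq_neg.mp (hneg ha).symm⟩
  tfae_have 4 → 1 := And.left
  tfae_finish
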